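/- Let (χ, μ) be a probability space, logit: ℝ^{d_h} × ℝ^{d_h} × ℝ^{d_p} → ℝ Lipschitz with constant L_logit (with respect to the sum of the Euclidean norms of the three arguments). Let h, ĥ: χ → ℝ^{d_h} and p, p̂: χ × χ → ℝ^{d_p} be bounded measurable, and for a pair (g, q) let Att_{g,q}(x,y) = exp(logit(g(x), g(y), q(x,y))) / ∫_χ exp(logit(g(x), g(z), q(x,z))) dμ(z). Define Δ(x,y) = ‖h(x) − ĥ(x)‖₂ + ‖h(y) − ĥ(y)‖₂ + ‖p(x,y) − p̂(x,y)‖₂ and assume sup_{x,y} Δ(x,y) ≤ 1/(2·L_logit). Then for all x, y ∈ χ: |Att_{ĥ,p̂}(x,y) − Att_{h,p}(x,y)| ≤ 2·L_logit·(Δ(x,y) + sup_z Δ(x,z))·Att_{h,p}(x,y). -/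

import Mathlib

/-!
At a fixed query `x` the scores `z ↦ logit (h x) (h z) (p x z)` of the two kernels differ by at
most `L·Δ(x,z)`. Hence the softmax numerators at `y` differ by a factor of at most
`exp (L·Δ(x,y))` and the normalizers by a factor of at most `exp (L·sup_z Δ(x,z))`, so the two
kernels agree up to a factor `exp u` with `u = L·(Δ(x,y) + sup_z Δ(x,z)) ≤ 1`; on `[0, 1]`,
`exp u ≤ 1 + 2u` turns this multiplicative bound into the additive one.
-/

open MeasureTheory Real

theorem Real.exp_le_one_add_two_mul {u : ℝ} (h0 : 0 ≤ u) (h1 : u ≤ 1) : exp u ≤ 1 + 2 * u := by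
  -- `exp` lies below its chord on `[0, 1]`, and `e - 1 < 2`.
  have hconv := convexOn_exp.2 (Set.mem_univ 0) (Set.mem_univ 1) (sub_nonneg.2 h1) h0
    (sub_add_cancel 1 u)
  simp only [smul_eq_mul, mul_zero, mul_one, zero_add, exp_zero] at hconv
  nlinarith [exp_one_lt_three]

theorem mul_le_half_of_le_one_div_two_mul {L t : ℝ} (hL : 0 ≤ L) (ht : t ≤ 1 / (2 * L)) :
    L * t ≤ 1 / 2 := by
  rcases hL.eq_or_lt with rfl | hL
  · norm_num
  calc L * t ≤ L * (1 / (2 * L)) := by gcongr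
    _ = 1 / 2 := by field_simp

theorem abs_sub_le_two_mul_of_le_exp_mul {P P' u : ℝ} (hP : 0 ≤ P) (h0 : 0 ≤ u) (h1 : u ≤ 1)
    (hup : P' ≤ exp u * P) (hlo : P ≤ exp u * P') : |P' - P| ≤ 2 * u * P := by
  have hlo' : (1 - u) * P ≤ P' :=
    calc (1 - u) * P ≤ exp (-u) * P := by gcongr; linarith [add_one_le_exp (-u)]
      _ ≤ exp (-u) * (exp u * P') := by gcongr
      _ = P' := by rw [← mul_assoc, ← exp_add, neg_add_cancel, exp_zero, one_mul]
  have hup' : P' ≤ (1 + 2 * u) * P := hup.trans (by gcongr; exact exp_le_one_add_two_mul h0 h1)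
  rw [abs_le]
  constructor <;> nlinarith [mul_nonneg h0 hP]

section Softmax

variable {χ : Type*} [MeasurableSpace χ]

/-- `Att_{g,q}(x, y) = softmax μ (fun z => logit (g x) (g z) (q x z)) y`. -/
noncomputable def softmax (μ : Measure χ) (s : χ → ℝ) (y : χ) : ℝ :=
  exp (s y) / ∫ z, exp (s z) ∂μ

variable {μ : Measure χ}

theorem softmax_nonneg (s : χ → ℝ) (y : χ) : 0 ≤ softmax μ s y :=
  div_nonneg (exp_pos _).le (integral_nonneg fun _ => (exp_pos _).le)

theorem softmax_le_exp_mul_softmax [NeZero μ] {s s' : χ → ℝ} {δ ε : ℝ} {y : χ}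
    (hs : Integrable (fun z => exp (s z)) μ) (hs' : Integrable (fun z => exp (s' z)) μ)
    (hy : s' y ≤ s y + δ) (hε : ∀ z, s z ≤ s' z + ε) :
    softmax μ s' y ≤ exp (δ + ε) * softmax μ s y := by
  have hZ : 0 < ∫ z, exp (s z) ∂μ := integral_exp_pos hs
  have hZ' : 0 < ∫ z, exp (s' z) ∂μ := integral_exp_pos hs'
  have hnum : exp (s' y) ≤ exp δ * exp (s y) := by
    rw [← exp_add]; exact exp_le_exp.2 (by linarith)
  have hden : ∫ z, exp (s z) ∂μ ≤ exp ε * ∫ z, exp (s' z) ∂μ := by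
    rw [← integral_const_mul]
    refine integral_mono hs (hs'.const_mul _) fun z => ?_
    rw [← exp_add]; exact exp_le_exp.2 (by linarith [hε z])
  unfold softmax
  rw [div_le_iff₀ hZ', exp_add]
  calc exp (s' y) ≤ exp δ * exp (s y) := hnum
    _ = exp δ * (exp (s y) / ∫ z, exp (s z) ∂μ) * ∫ z, exp (s z) ∂μ := by field_simp
    _ ≤ exp δ * (exp (s y) / ∫ z, exp (s z) ∂μ) * (exp ε * ∫ z, exp (s' z) ∂μ) := by gcongr
    _ = _ := by ring

theorem abs_softmax_sub_softmax_le [NeZero μ] {s s' : χ → ℝ} {δ ε : ℝ} {y : χ}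
    (hs : Integrable (fun z => exp (s z)) μ) (hs' : Integrable (fun z => exp (s' z)) μ)
    (hy : |s' y - s y| ≤ δ) (hε : ∀ z, |s' z - s z| ≤ ε) (hδε : δ + ε ≤ 1) :
    |softmax μ s' y - softmax μ s y| ≤ 2 * (δ + ε) * softmax μ s y := by
  have hy' := abs_le.1 hy
  have hε' z := abs_le.1 (hε z)
  refine abs_sub_le_two_mul_of_le_exp_mul (softmax_nonneg s y)
    (add_nonneg ((abs_nonneg _).trans hy) ((abs_nonneg _).trans (hε y))) hδε ?_ ?_
  · exact softmax_le_exp_mul_softmax hs hs' (by linarith) fun z => by linarith [hε' z]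
  · exact softmax_le_exp_mul_softmax hs' hs (by linarith) fun z => by linarith [hε' z]

end Softmax

section LipschitzScore

variable {E F G : Type*} [SeminormedAddCommGroup E] [SeminormedAddCommGroup F]
  [SeminormedAddCommGroup G] {f : E → F → G → ℝ} {L : ℝ}

theorem continuous_uncurry₃_of_abs_sub_le (hL : 0 ≤ L)
    (hf : ∀ a b c a' b' c', |f a b c - f a' b' c'| ≤ L * (‖a - a'‖ + ‖b - b'‖ + ‖c - c'‖)) :
    Continuous fun t : E × F × G => f t.1 t.2.1 t.2.2 := by
  refine (LipschitzWith.of_dist_le' (K := 3 * L) fun t t' => ?_).continuous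
  have h1 : ‖t.1 - t'.1‖ ≤ ‖t - t'‖ := norm_fst_le (t - t')
  have h2 : ‖t.2.1 - t'.2.1‖ ≤ ‖t - t'‖ := (norm_fst_le (t - t').2).trans (norm_snd_le _)
  have h3 : ‖t.2.2 - t'.2.2‖ ≤ ‖t - t'‖ := (norm_snd_le (t - t').2).trans (norm_snd_le _)
  rw [Real.dist_eq, dist_eq_norm]
  calc _ ≤ L * (‖t.1 - t'.1‖ + ‖t.2.1 - t'.2.1‖ + ‖t.2.2 - t'.2.2‖) := hf _ _ _ _ _ _
    _ ≤ L * (‖t - t'‖ + ‖t - t'‖ + ‖t - t'‖) := by gcongr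
    _ = 3 * L * ‖t - t'‖ := by ring

theorem integrable_exp_of_abs_sub_le [MeasurableSpace F] [BorelSpace F] [SecondCountableTopology F]
    [MeasurableSpace G] [BorelSpace G] [SecondCountableTopology G]
    {χ : Type*} [MeasurableSpace χ] {μ : Measure χ} [IsFiniteMeasure μ] (hL : 0 ≤ L)
    (hf : ∀ a b c a' b' c', |f a b c - f a' b' c'| ≤ L * (‖a - a'‖ + ‖b - b'‖ + ‖c - c'‖))
    (a : E) {g : χ → F} {q : χ → G} (hg : Measurable g) (hq : Measurable q) {Mg Mq : ℝ}
    (hgM : ∀ z, ‖g z‖ ≤ Mg) (hqM : ∀ z, ‖q z‖ ≤ Mq) :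
    Integrable (fun z => exp (f a (g z) (q z))) μ := by
  have hmeas : Measurable fun z => f a (g z) (q z) :=
    ((continuous_uncurry₃_of_abs_sub_le hL hf).comp
      (continuous_const.prodMk continuous_id)).measurable.comp (hg.prodMk hq)
  refine .of_bound hmeas.exp.aestronglyMeasurable (exp (|f a 0 0| + L * (Mg + Mq)))
    (.of_forall fun z => ?_)
  have hz := hf a (g z) (q z) a 0 0
  rw [sub_self, norm_zero, sub_zero, sub_zero, zero_add] at hz
  rw [norm_of_nonneg (exp_pos _).le, exp_le_exp]
  calc f a (g z) (q z) ≤ |f a 0 0| + |f a (g z) (q z) - f a 0 0| := by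
        linarith [le_abs_self (f a 0 0), le_abs_self (f a (g z) (q z) - f a 0 0)]
    _ ≤ |f a 0 0| + L * (Mg + Mq) := by grw [hz, hgM z, hqM z]

end LipschitzScore

/-- Attention perturbation bound: with `Δ(x,y) = ‖h(x)−h'(x)‖ + ‖h(y)−h'(y)‖ +
‖p(x,y)−p'(x,y)‖` and `sup Δ ≤ 1/(2·L_logit)`, the softmax attention kernels satisfy
`|Att_{h',p'}(x,y) − Att_{h,p}(x,y)| ≤ 2·L_logit·(Δ(x,y) + sup_z Δ(x,z))·Att_{h,p}(x,y)`. -/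
theorem stmt6
    {χ : Type*} [MeasurableSpace χ]
    (μ : Measure χ) [IsProbabilityMeasure μ]
    (dh dp : ℕ)
    (logit : EuclideanSpace ℝ (Fin dh) → EuclideanSpace ℝ (Fin dh) →
      EuclideanSpace ℝ (Fin dp) → ℝ)
    (Llogit : ℝ) (hLlogit : 0 ≤ Llogit)
    (hlogit : ∀ a b c a' b' c', |logit a b c - logit a' b' c'| ≤
      Llogit * (‖a - a'‖ + ‖b - b'‖ + ‖c - c'‖))
    (h h' : χ → EuclideanSpace ℝ (Fin dh))
    (p p' : χ → χ → EuclideanSpace ℝ (Fin dp))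
    (hhmeas : Measurable h) (hh'meas : Measurable h')
    (hhbdd : ∃ M : ℝ, ∀ x, ‖h x‖ ≤ M) (hh'bdd : ∃ M : ℝ, ∀ x, ‖h' x‖ ≤ M)
    (hpmeas : Measurable fun q : χ × χ => p q.1 q.2)
    (hp'meas : Measurable fun q : χ × χ => p' q.1 q.2)
    (hpbdd : ∃ M : ℝ, ∀ x y, ‖p x y‖ ≤ M) (hp'bdd : ∃ M : ℝ, ∀ x y, ‖p' x y‖ ≤ M)
    (hsmall : (⨆ q : χ × χ,
        (‖h q.1 - h' q.1‖ + ‖h q.2 - h' q.2‖ + ‖p q.1 q.2 - p' q.1 q.2‖)) ≤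
      1 / (2 * Llogit)) :
    ∀ x y : χ,
      |(Real.exp (logit (h' x) (h' y) (p' x y)) /
          ∫ z, Real.exp (logit (h' x) (h' z) (p' x z)) ∂μ) -
        (Real.exp (logit (h x) (h y) (p x y)) /
          ∫ z, Real.exp (logit (h x) (h z) (p x z)) ∂μ)| ≤
      2 * Llogit *
        ((‖h x - h' x‖ + ‖h y - h' y‖ + ‖p x y - p' x y‖) +
          ⨆ z, (‖h x - h' x‖ + ‖h z - h' z‖ + ‖p x z - p' x z‖)) *
        (Real.exp (logit (h x) (h y) (p x y)) /
          ∫ z, Real.exp (logit (h x) (h z) (p x z)) ∂μ) := by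
  intro x y
  have : Nonempty χ := ⟨x⟩
  obtain ⟨Mh, hMh⟩ := hhbdd
  obtain ⟨Mh', hMh'⟩ := hh'bdd
  obtain ⟨Mp, hMp⟩ := hpbdd
  obtain ⟨Mp', hMp'⟩ := hp'bdd
  set Δ : χ → χ → ℝ := fun a b => ‖h a - h' a‖ + ‖h b - h' b‖ + ‖p a b - p' a b‖
  have hΔM a b : Δ a b ≤ (Mh + Mh') + (Mh + Mh') + (Mp + Mp') :=
    add_le_add (add_le_add (norm_sub_le_of_le (hMh a) (hMh' a))
      (norm_sub_le_of_le (hMh b) (hMh' b))) (norm_sub_le_of_le (hMp a b) (hMp' a b))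
  have hrow : ∀ z, Δ x z ≤ ⨆ z, Δ x z := le_ciSup ⟨_, Set.forall_mem_range.2 (hΔM x)⟩
  have hsmall' a b : Δ a b ≤ 1 / (2 * Llogit) :=
    (le_ciSup (f := fun q : χ × χ => Δ q.1 q.2)
      ⟨_, Set.forall_mem_range.2 fun q => hΔM q.1 q.2⟩ (a, b)).trans hsmall
  have hu : Llogit * Δ x y + Llogit * ⨆ z, Δ x z ≤ 1 := by
    linarith [mul_le_half_of_le_one_div_two_mul hLlogit (hsmall' x y),
      mul_le_half_of_le_one_div_two_mul hLlogit (ciSup_le (hsmall' x))]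
  have hscore z : |logit (h' x) (h' z) (p' x z) - logit (h x) (h z) (p x z)| ≤ Llogit * Δ x z :=
    abs_sub_comm (logit _ _ _) _ ▸ hlogit _ _ _ _ _ _
  show |softmax μ (fun z => logit (h' x) (h' z) (p' x z)) y -
      softmax μ (fun z => logit (h x) (h z) (p x z)) y| ≤
    2 * Llogit * (Δ x y + ⨆ z, Δ x z) * softmax μ (fun z => logit (h x) (h z) (p x z)) y
  have hpx : Measurable (p x) := hpmeas.comp measurable_prodMk_left
  have hp'x : Measurable (p' x) := hp'meas.comp measurable_prodMk_left
  refine (abs_softmax_sub_softmax_le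
    (integrable_exp_of_abs_sub_le hLlogit hlogit (h x) hhmeas hpx hMh (hMp x))
    (integrable_exp_of_abs_sub_le hLlogit hlogit (h' x) hh'meas hp'x hMh' (hMp' x))
    (hscore y) (fun z => (hscore z).trans (by grw [hrow z])) hu).trans_eq (by ring)
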